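/- Let T be a string of length n ≥ 2 and T' obtained from T by deleting a single character (so |T'| = n-1). Then for every 1 ≤ k ≤ n-1, Substr(T',k) ≤ Substr(T,k) + (k-1), and consequently δ(T') ≤ δ(T) + 1. -/

import Mathlib

/-- `substrCount T k` is the number of distinct length-`k` (contiguous) substrings of `T`. -/
def substrCount {α : Type*} [DecidableEq α] (T : List α) (k : ℕ) : ℕ :=
  ((Finset.range (T.length - k + 1)).image fun j => (T.drop j).take k).card

/-- Substring complexity `δ(T) = max_{1 ≤ k ≤ |T|} Substr(T,k)/k`. -/
def delta {α : Type*} [DecidableEq α] (T : List α) : NNRat :=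
  (Finset.Icc 1 T.length).sup fun k => (substrCount T k : NNRat) / (k : NNRat)

/-!
Write `T = L ++ a :: R` and `T' = L ++ R`. A length-`k` window of `T'` lying inside `L` or inside
`R` is also a window of `T`; the remaining windows of `T'` contain the junction between `L` and
`R`, and there are at most `k - 1` of them. Dividing by `k` turns the extra `k - 1` into at most
`1` in every term of the maximum defining `δ`.
-/

section Windows

variable {α : Type*}

theorem List.take_drop_append_of_add_le_length {L : List α} (M : List α) {j k : ℕ}
    (h : j + k ≤ L.length) : ((L ++ M).drop j).take k = (L.drop j).take k := by
  rw [List.drop_append_of_le_length (by omega), List.take_append_of_le_length (by simp; omega)]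

theorem List.drop_append_cons_succ_of_length_le (L R : List α) (a : α) {j : ℕ}
    (h : L.length ≤ j) : (L ++ a :: R).drop (j + 1) = (L ++ R).drop j := by
  rw [List.drop_append, List.drop_append, List.drop_eq_nil_of_le (by omega),
    List.drop_eq_nil_of_le h, Nat.sub_add_comm h]
  rfl

variable [DecidableEq α]

theorem substrCount_append_le_add (L R : List α) (a : α) {k : ℕ}
    (hk : k ≤ L.length + R.length) :
    substrCount (L ++ R) k ≤ substrCount (L ++ a :: R) k + (k - 1) := by
  set window := fun (T : List α) (j : ℕ) => (T.drop j).take k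
  set junction := Finset.Ico (L.length + 1 - k) L.length with hjunction
  have hcover : (Finset.range ((L ++ R).length - k + 1)).image (window (L ++ R)) ⊆
      (Finset.range ((L ++ a :: R).length - k + 1)).image (window (L ++ a :: R)) ∪
        junction.image (window (L ++ R)) := by
    simp only [Finset.subset_iff, Finset.mem_image, Finset.mem_union, Finset.mem_range,
      hjunction, Finset.mem_Ico, List.length_append, List.length_cons]
    rintro _ ⟨j, hj, rfl⟩
    by_cases hleft : j + k ≤ L.length
    · exact .inl ⟨j, by omega,
        by simp only [window, List.take_drop_append_of_add_le_length _ hleft]⟩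
    by_cases hright : L.length ≤ j
    · exact .inl ⟨j + 1, by omega, by simp only [window,
        List.drop_append_cons_succ_of_length_le L R a hright]⟩
    · exact .inr ⟨j, by omega, rfl⟩
  calc substrCount (L ++ R) k
      ≤ substrCount (L ++ a :: R) k + (junction.image (window (L ++ R))).card :=
        (Finset.card_le_card hcover).trans (Finset.card_union_le _ _)
    _ ≤ substrCount (L ++ a :: R) k + (k - 1) := by
        grw [Finset.card_image_le, hjunction, Nat.card_Ico]
        omega

theorem substrCount_div_le_delta (T : List α) {k : ℕ} (hk1 : 1 ≤ k) (hk : k ≤ T.length) :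
    (substrCount T k : NNRat) / k ≤ delta T :=
  Finset.le_sup (f := fun k => (substrCount T k : NNRat) / k) (Finset.mem_Icc.2 ⟨hk1, hk⟩)

theorem delta_le_add_one_of_substrCount_le {T T' : List α} (hlen : T'.length ≤ T.length)
    (h : ∀ k, 1 ≤ k → k ≤ T'.length → substrCount T' k ≤ substrCount T k + (k - 1)) :
    delta T' ≤ delta T + 1 := by
  refine Finset.sup_le fun k hk => ?_
  obtain ⟨hk1, hk⟩ := Finset.mem_Icc.1 hk
  have hkpos : (0 : NNRat) < k := by exact_mod_cast hk1
  calc (substrCount T' k : NNRat) / k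
      ≤ ((substrCount T k + (k - 1) : ℕ) : NNRat) / k := by
        gcongr
        exact h k hk1 hk
    _ = (substrCount T k : NNRat) / k + ((k - 1 : ℕ) : NNRat) / k := by
        rw [Nat.cast_add, add_div]
    _ ≤ delta T + 1 := by
        gcongr
        · exact substrCount_div_le_delta T hk1 (hk.trans hlen)
        · rw [div_le_one hkpos]
          exact_mod_cast Nat.sub_le k 1

end Windows

theorem deletion_bounds_general {α : Type*} [DecidableEq α]
    (T T' : List α) (i : ℕ) (hi : i < T.length)
    (hT' : T' = T.take i ++ T.drop (i + 1)) :
    (∀ k, 1 ≤ k → k ≤ T.length - 1 → substrCount T' k ≤ substrCount T k + (k - 1)) ∧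
      delta T' ≤ delta T + 1 := by
  obtain ⟨L, a, R, rfl, rfl⟩ : ∃ L a R, T = L ++ a :: R ∧ T' = L ++ R :=
    ⟨T.take i, T[i], T.drop (i + 1), by simp, hT'⟩
  have hsub : ∀ k, 1 ≤ k → k ≤ (L ++ R).length →
      substrCount (L ++ R) k ≤ substrCount (L ++ a :: R) k + (k - 1) :=
    fun k _ hk => substrCount_append_le_add L R a (by simpa using hk)
  refine ⟨fun k hk1 hk => hsub k hk1 (by simpa using hk), ?_⟩
  exact delta_le_add_one_of_substrCount_le (by simp) hsub

/-- If `T` has length `n ≥ 2` and `T'` is obtained from `T` by deleting a single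
character (so `|T'| = n - 1`), then for every `1 ≤ k ≤ n - 1` we have
`Substr(T',k) ≤ Substr(T,k) + (k - 1)`, and consequently `δ(T') ≤ δ(T) + 1`. -/
theorem deletion_bounds {α : Type*} [DecidableEq α]
    (T T' : List α) (i : ℕ) (hlen : 2 ≤ T.length) (hi : i < T.length)
    (hT' : T' = T.take i ++ T.drop (i + 1)) :
    (∀ k, 1 ≤ k → k ≤ T.length - 1 → substrCount T' k ≤ substrCount T k + (k - 1)) ∧
      delta T' ≤ delta T + 1 :=
  deletion_bounds_general T T' i hi hT'
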